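/- Let e₁,e₂,o₁,o₂ be pairwise distinct reals. For the Hietarinta equation solved as u_{1,1} = F(u_{0,0}, u_{0,1}, u_{1,0}), define ξ(x,y) = ((x+e₂)(y+o₁))/((x+e₁)(y+o₂)). Then every function of the form g(x,y) = θ(ξ(x,y)) + A·log((y+o₂)/(y+o₁)) + B, with θ ∈ C², A, B ∈ ℝ, satisfies the system g_{xx} + ((e₂−e₁)(y+o₁)(y+o₂))/((o₂−o₁)(x+e₁)(x+e₂))·g_{xy} + ((2x+e₁+e₂)/((x+e₁)(x+e₂)))·g_x = 0 and g_{yy} + ((o₂−o₁)(x+e₁)(x+e₂))/((e₂−e₁)(y+o₁)(y+o₂))·g_{xy} + ((2y+o₁+o₂)/((y+o₁)(y+o₂)))·g_y = 0, on any region where x+e₁, x+e₂, y+o₁, y+o₂ are all nonzero. -/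

import Mathlib

set_option maxHeartbeats 1000000

/-- The overdetermined determining system for two-points linearizing
transformations of the Hietarinta equation (x = u₀₀, y = u₀₁). -/
def SolvesSys18 (e₁ e₂ o₁ o₂ : ℝ) (g : ℝ → ℝ → ℝ) : Prop :=
  ∀ x y : ℝ, x + e₁ ≠ 0 → x + e₂ ≠ 0 → y + o₁ ≠ 0 → y + o₂ ≠ 0 →
    (deriv (fun t => deriv (fun s => g s y) t) x
        + ((e₂ - e₁) * (y + o₁) * (y + o₂)) / ((o₂ - o₁) * (x + e₁) * (x + e₂))
            * deriv (fun t => deriv (fun s => g s t) x) y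
        + ((2 * x + e₁ + e₂) / ((x + e₁) * (x + e₂))) * deriv (fun s => g s y) x = 0)
    ∧ (deriv (fun t => deriv (fun s => g x s) t) y
        + ((o₂ - o₁) * (x + e₁) * (x + e₂)) / ((e₂ - e₁) * (y + o₁) * (y + o₂))
            * deriv (fun t => deriv (fun s => g s t) x) y
        + ((2 * y + o₁ + o₂) / ((y + o₁) * (y + o₂))) * deriv (fun s => g x s) y = 0)


lemma hfrac (a b x : ℝ) (h : x + b ≠ 0) :
    HasDerivAt (fun s => (s + a) / (s + b)) ((b - a) / (x + b) ^ 2) x := by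
  have h1 : HasDerivAt (fun s : ℝ => s + a) 1 x := (hasDerivAt_id x).add_const a
  have h2 : HasDerivAt (fun s : ℝ => s + b) 1 x := (hasDerivAt_id x).add_const b
  have h3 := h1.fun_div h2 h
  refine h3.congr_deriv ?_
  field_simp
  ring

lemma hfrac2 (a b x : ℝ) (h : x + b ≠ 0) :
    HasDerivAt (fun s => (b - a) / (s + b) ^ 2) (-2 * (b - a) / (x + b) ^ 3) x := by
  have h2 : HasDerivAt (fun s : ℝ => (s + b) ^ 2) (2 * (x + b)) x := by
    have h0 := (((hasDerivAt_id x).add_const b).fun_pow 2)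
    refine h0.congr_deriv ?_
    simp [id_eq]
  have h3 := (hasDerivAt_const x (b - a)).fun_div h2 (pow_ne_zero 2 h)
  refine h3.congr_deriv ?_
  field_simp
  ring

lemma hlog (o₁ o₂ y : ℝ) (h1 : y + o₁ ≠ 0) (h2 : y + o₂ ≠ 0) :
    HasDerivAt (fun t => Real.log ((t + o₂) / (t + o₁)))
      ((o₁ - o₂) / ((y + o₁) * (y + o₂))) y := by
  have h0 : (y + o₂) / (y + o₁) ≠ 0 := div_ne_zero h2 h1
  have h3 := (Real.hasDerivAt_log h0).comp y (hfrac o₂ o₁ y h1)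
  refine h3.congr_deriv ?_
  field_simp

lemma hlog2 (o₁ o₂ y : ℝ) (h1 : y + o₁ ≠ 0) (h2 : y + o₂ ≠ 0) :
    HasDerivAt (fun t => (o₁ - o₂) / ((t + o₁) * (t + o₂)))
      (-((o₁ - o₂) * (2 * y + o₁ + o₂)) / ((y + o₁) * (y + o₂)) ^ 2) y := by
  have hd : HasDerivAt (fun t : ℝ => (t + o₁) * (t + o₂)) ((y + o₂) + (y + o₁)) y := by
    have h0 := ((hasDerivAt_id y).add_const o₁).fun_mul ((hasDerivAt_id y).add_const o₂)
    refine h0.congr_deriv ?_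
    simp [id_eq]
  have h3 := (hasDerivAt_const y (o₁ - o₂)).fun_div hd (mul_ne_zero h1 h2)
  refine h3.congr_deriv ?_
  ring

set_option maxHeartbeats 1000000 in
lemma algebra1 (X1 X2 Y1 Y2 u v : ℝ) (h1 : X1 ≠ 0) (h2 : X2 ≠ 0) (h3 : Y1 ≠ 0)
    (h4 : Y2 ≠ 0) (h5 : X2 - X1 ≠ 0) (h6 : Y2 - Y1 ≠ 0) :
    v * ((X1 - X2) / X1 ^ 2 * (Y1 / Y2)) * ((X1 - X2) / X1 ^ 2 * (Y1 / Y2)) +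
        u * (-2 * (X1 - X2) / X1 ^ 3 * (Y1 / Y2)) +
      (X2 - X1) * Y1 * Y2 / ((Y2 - Y1) * X1 * X2) *
        (v * (X2 / X1 * ((Y2 - Y1) / Y2 ^ 2)) * ((X1 - X2) / X1 ^ 2 * (Y1 / Y2)) +
         u * ((X1 - X2) / X1 ^ 2 * ((Y2 - Y1) / Y2 ^ 2))) +
      (X1 + X2) / (X1 * X2) * (u * ((X1 - X2) / X1 ^ 2 * (Y1 / Y2))) = 0 := by
  field_simp
  ring

set_option maxHeartbeats 1000000 in
lemma algebra2 (X1 X2 Y1 Y2 u v A : ℝ) (h1 : X1 ≠ 0) (h2 : X2 ≠ 0) (h3 : Y1 ≠ 0)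
    (h4 : Y2 ≠ 0) (h5 : X2 - X1 ≠ 0) (h6 : Y2 - Y1 ≠ 0) :
    v * (X2 / X1 * ((Y2 - Y1) / Y2 ^ 2)) * (X2 / X1 * ((Y2 - Y1) / Y2 ^ 2)) +
          u * (X2 / X1 * (-2 * (Y2 - Y1) / Y2 ^ 3)) +
        A * (-((Y1 - Y2) * (Y1 + Y2)) / (Y1 * Y2) ^ 2) +
      (Y2 - Y1) * X1 * X2 / ((X2 - X1) * Y1 * Y2) *
        (v * (X2 / X1 * ((Y2 - Y1) / Y2 ^ 2)) * ((X1 - X2) / X1 ^ 2 * (Y1 / Y2)) +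
         u * ((X1 - X2) / X1 ^ 2 * ((Y2 - Y1) / Y2 ^ 2))) +
      (Y1 + Y2) / (Y1 * Y2) * (u * (X2 / X1 * ((Y2 - Y1) / Y2 ^ 2)) + A * ((Y1 - Y2) / (Y1 * Y2))) = 0 := by
  field_simp
  ring

theorem stmt18 (e₁ e₂ o₁ o₂ : ℝ)
    (h12 : e₁ ≠ e₂) (h1o1 : e₁ ≠ o₁) (h1o2 : e₁ ≠ o₂)
    (h2o1 : e₂ ≠ o₁) (h2o2 : e₂ ≠ o₂) (ho : o₁ ≠ o₂)
    (θ : ℝ → ℝ) (hθ : ContDiff ℝ 2 θ) (A B : ℝ) :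
    SolvesSys18 e₁ e₂ o₁ o₂ (fun x y =>
      θ (((x + e₂) * (y + o₁)) / ((x + e₁) * (y + o₂)))
        + A * Real.log ((y + o₂) / (y + o₁)) + B) := by
  have he : e₁ - e₂ ≠ 0 := sub_ne_zero.mpr h12
  have hoo : o₂ - o₁ ≠ 0 := sub_ne_zero.mpr (Ne.symm ho)
  have hθ0 : Differentiable ℝ θ := hθ.differentiable two_ne_zero
  have hθ1 : Differentiable ℝ (deriv θ) := by
    have h2 : ContDiff ℝ ((1 : WithTop ℕ∞) + 1) θ := by exact_mod_cast hθ
    exact (contDiff_succ_iff_deriv.mp h2).2.2.differentiable one_ne_zero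
  have hg : (fun x y => θ (((x + e₂) * (y + o₁)) / ((x + e₁) * (y + o₂)))
        + A * Real.log ((y + o₂) / (y + o₁)) + B)
      = (fun x y => θ ((x + e₂) / (x + e₁) * ((y + o₁) / (y + o₂)))
        + A * Real.log ((y + o₂) / (y + o₁)) + B) := by
    funext x y
    rw [mul_div_mul_comm]
  rw [hg]
  intro x y hx1 hx2 hy1 hy2
  set T1 := deriv θ with hT1
  set T2 := deriv (deriv θ) with hT2
  -- first x-derivative, valid for all t and all s with s+e₁ ≠ 0
  have HDx : ∀ t s : ℝ, s + e₁ ≠ 0 →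
      HasDerivAt (fun s' => θ ((s' + e₂) / (s' + e₁) * ((t + o₁) / (t + o₂)))
          + A * Real.log ((t + o₂) / (t + o₁)) + B)
        (T1 ((s + e₂) / (s + e₁) * ((t + o₁) / (t + o₂)))
          * ((e₁ - e₂) / (s + e₁) ^ 2 * ((t + o₁) / (t + o₂)))) s := by
    intro t s hs
    have h1 := (hfrac e₂ e₁ s hs).mul_const ((t + o₁) / (t + o₂))
    have h2 := ((hθ0 _).hasDerivAt).comp s h1
    exact (h2.add_const (A * Real.log ((t + o₂) / (t + o₁)))).add_const B
  -- first y-derivative, valid for all t with t+o₁≠0, t+o₂≠0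
  have HDy : ∀ t : ℝ, t + o₁ ≠ 0 → t + o₂ ≠ 0 →
      HasDerivAt (fun t' => θ ((x + e₂) / (x + e₁) * ((t' + o₁) / (t' + o₂)))
          + A * Real.log ((t' + o₂) / (t' + o₁)) + B)
        (T1 ((x + e₂) / (x + e₁) * ((t + o₁) / (t + o₂)))
          * ((x + e₂) / (x + e₁) * ((o₂ - o₁) / (t + o₂) ^ 2))
          + A * ((o₁ - o₂) / ((t + o₁) * (t + o₂)))) t := by
    intro t ht1 ht2
    have h1 := (hfrac o₁ o₂ t ht2).const_mul ((x + e₂) / (x + e₁))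
    have h2 := ((hθ0 _).hasDerivAt).comp t h1
    exact (h2.add ((hlog o₁ o₂ t ht1 ht2).const_mul A)).add_const B
  -- Dx
  have hDx : deriv (fun s => θ ((s + e₂) / (s + e₁) * ((y + o₁) / (y + o₂)))
        + A * Real.log ((y + o₂) / (y + o₁)) + B) x
      = T1 ((x + e₂) / (x + e₁) * ((y + o₁) / (y + o₂)))
          * ((e₁ - e₂) / (x + e₁) ^ 2 * ((y + o₁) / (y + o₂))) :=
    (HDx y x hx1).deriv
  -- Dy
  have hDy : deriv (fun s => θ ((x + e₂) / (x + e₁) * ((s + o₁) / (s + o₂)))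
        + A * Real.log ((s + o₂) / (s + o₁)) + B) y
      = T1 ((x + e₂) / (x + e₁) * ((y + o₁) / (y + o₂)))
          * ((x + e₂) / (x + e₁) * ((o₂ - o₁) / (y + o₂) ^ 2))
          + A * ((o₁ - o₂) / ((y + o₁) * (y + o₂))) :=
    (HDy y hy1 hy2).deriv
  -- Dxy
  have hinner : (fun t => deriv (fun s => θ ((s + e₂) / (s + e₁) * ((t + o₁) / (t + o₂)))
        + A * Real.log ((t + o₂) / (t + o₁)) + B) x)
      = fun t => T1 ((x + e₂) / (x + e₁) * ((t + o₁) / (t + o₂)))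
          * ((e₁ - e₂) / (x + e₁) ^ 2 * ((t + o₁) / (t + o₂))) :=
    funext fun t => (HDx t x hx1).deriv
  have hDxy : deriv (fun t => deriv (fun s => θ ((s + e₂) / (s + e₁) * ((t + o₁) / (t + o₂)))
        + A * Real.log ((t + o₂) / (t + o₁)) + B) x) y
      = T2 ((x + e₂) / (x + e₁) * ((y + o₁) / (y + o₂)))
          * ((x + e₂) / (x + e₁) * ((o₂ - o₁) / (y + o₂) ^ 2))
          * ((e₁ - e₂) / (x + e₁) ^ 2 * ((y + o₁) / (y + o₂)))
        + T1 ((x + e₂) / (x + e₁) * ((y + o₁) / (y + o₂)))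
          * ((e₁ - e₂) / (x + e₁) ^ 2 * ((o₂ - o₁) / (y + o₂) ^ 2)) := by
    rw [hinner]
    have hf := ((hθ1 _).hasDerivAt).comp y
      ((hfrac o₁ o₂ y hy2).const_mul ((x + e₂) / (x + e₁)))
    have hg2 := (hfrac o₁ o₂ y hy2).const_mul ((e₁ - e₂) / (x + e₁) ^ 2)
    exact (hf.mul hg2).deriv
  -- Dxx
  have hUx : ∀ᶠ t in nhds x, t + e₁ ≠ 0 := by
    have hc : ContinuousAt (fun t : ℝ => t + e₁) x := by fun_prop
    exact hc.eventually_ne hx1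
  have hEvx : (fun t => deriv (fun s => θ ((s + e₂) / (s + e₁) * ((y + o₁) / (y + o₂)))
        + A * Real.log ((y + o₂) / (y + o₁)) + B) t)
      =ᶠ[nhds x] fun t => T1 ((t + e₂) / (t + e₁) * ((y + o₁) / (y + o₂)))
          * ((e₁ - e₂) / (t + e₁) ^ 2 * ((y + o₁) / (y + o₂))) :=
    hUx.mono fun t ht => (HDx y t ht).deriv
  have hDxx : deriv (fun t => deriv (fun s => θ ((s + e₂) / (s + e₁) * ((y + o₁) / (y + o₂)))
        + A * Real.log ((y + o₂) / (y + o₁)) + B) t) x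
      = T2 ((x + e₂) / (x + e₁) * ((y + o₁) / (y + o₂)))
          * ((e₁ - e₂) / (x + e₁) ^ 2 * ((y + o₁) / (y + o₂)))
          * ((e₁ - e₂) / (x + e₁) ^ 2 * ((y + o₁) / (y + o₂)))
        + T1 ((x + e₂) / (x + e₁) * ((y + o₁) / (y + o₂)))
          * (-2 * (e₁ - e₂) / (x + e₁) ^ 3 * ((y + o₁) / (y + o₂))) := by
    rw [hEvx.deriv_eq]
    have hf := ((hθ1 _).hasDerivAt).comp x
      ((hfrac e₂ e₁ x hx1).mul_const ((y + o₁) / (y + o₂)))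
    have hg2 := (hfrac2 e₂ e₁ x hx1).mul_const ((y + o₁) / (y + o₂))
    exact (hf.mul hg2).deriv
  -- Dyy
  have hUy : ∀ᶠ t in nhds y, t + o₁ ≠ 0 ∧ t + o₂ ≠ 0 := by
    have hc1 : ContinuousAt (fun t : ℝ => t + o₁) y := by fun_prop
    have hc2 : ContinuousAt (fun t : ℝ => t + o₂) y := by fun_prop
    exact (hc1.eventually_ne hy1).and (hc2.eventually_ne hy2)
  have hEvy : (fun t => deriv (fun s => θ ((x + e₂) / (x + e₁) * ((s + o₁) / (s + o₂)))
        + A * Real.log ((s + o₂) / (s + o₁)) + B) t)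
      =ᶠ[nhds y] fun t => T1 ((x + e₂) / (x + e₁) * ((t + o₁) / (t + o₂)))
          * ((x + e₂) / (x + e₁) * ((o₂ - o₁) / (t + o₂) ^ 2))
          + A * ((o₁ - o₂) / ((t + o₁) * (t + o₂))) :=
    hUy.mono fun t ht => (HDy t ht.1 ht.2).deriv
  have hDyy : deriv (fun t => deriv (fun s => θ ((x + e₂) / (x + e₁) * ((s + o₁) / (s + o₂)))
        + A * Real.log ((s + o₂) / (s + o₁)) + B) t) y
      = (T2 ((x + e₂) / (x + e₁) * ((y + o₁) / (y + o₂)))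
          * ((x + e₂) / (x + e₁) * ((o₂ - o₁) / (y + o₂) ^ 2))
          * ((x + e₂) / (x + e₁) * ((o₂ - o₁) / (y + o₂) ^ 2))
        + T1 ((x + e₂) / (x + e₁) * ((y + o₁) / (y + o₂)))
          * ((x + e₂) / (x + e₁) * (-2 * (o₂ - o₁) / (y + o₂) ^ 3)))
        + A * (-((o₁ - o₂) * (2 * y + o₁ + o₂)) / ((y + o₁) * (y + o₂)) ^ 2) := by
    rw [hEvy.deriv_eq]
    have hf := ((hθ1 _).hasDerivAt).comp y
      ((hfrac o₁ o₂ y hy2).const_mul ((x + e₂) / (x + e₁)))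
    have hg2 := (hfrac2 o₁ o₂ y hy2).const_mul ((x + e₂) / (x + e₁))
    have hl := (hlog2 o₁ o₂ y hy1 hy2).const_mul A
    exact ((hf.mul hg2).add hl).deriv
  set u := T1 ((x + e₂) / (x + e₁) * ((y + o₁) / (y + o₂))) with hu
  set v := T2 ((x + e₂) / (x + e₁) * ((y + o₁) / (y + o₂))) with hv
  constructor
  · rw [hDxx, hDxy, hDx,
      show e₁ - e₂ = (x + e₁) - (x + e₂) from by ring,
      show e₂ - e₁ = (x + e₂) - (x + e₁) from by ring,
      show o₂ - o₁ = (y + o₂) - (y + o₁) from by ring,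
      show 2 * x + e₁ + e₂ = (x + e₁) + (x + e₂) from by ring]
    exact algebra1 (x + e₁) (x + e₂) (y + o₁) (y + o₂) u v hx1 hx2 hy1 hy2
      (by simpa using sub_ne_zero.mpr (Ne.symm h12))
      (by simpa using sub_ne_zero.mpr (Ne.symm ho))
  · rw [hDyy, hDxy, hDy,
      show e₁ - e₂ = (x + e₁) - (x + e₂) from by ring,
      show e₂ - e₁ = (x + e₂) - (x + e₁) from by ring,
      show o₂ - o₁ = (y + o₂) - (y + o₁) from by ring,
      show o₁ - o₂ = (y + o₁) - (y + o₂) from by ring,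
      show 2 * y + o₁ + o₂ = (y + o₁) + (y + o₂) from by ring]
    exact algebra2 (x + e₁) (x + e₂) (y + o₁) (y + o₂) u v A hx1 hx2 hy1 hy2
      (by simpa using sub_ne_zero.mpr (Ne.symm h12))
      (by simpa using sub_ne_zero.mpr (Ne.symm ho))
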